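/- For each fixed n ≥ 1, the polynomial P_n ∈ ℚ[X] satisfying B_n^(m) = P_n(m) for all m ∈ ℕ has degree exactly n-1, and its leading coefficient equals n!/2^{n-1}. -/

import Mathlib

/-- Stirling numbers of the second kind. -/
def stirling : ℕ → ℕ → ℕ
  | 0, 0 => 1
  | 0, _ + 1 => 0
  | _ + 1, 0 => 0
  | n + 1, k + 1 => (k + 1) * stirling n (k + 1) + stirling n k

/-- Higher order Bell numbers: `higherBell m n` is `B_n^(m)`. -/
def higherBell : ℕ → ℕ → ℕ
  | 0, _ => 1
  | _ + 1, 0 => 1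
  | m + 1, n + 1 => ∑ k ∈ Finset.Icc 1 (n + 1), higherBell m k * stirling (n + 1) k

open Polynomial

lemma coeff_delta_pow (a : ℚ) (e k : ℕ) :
    ((C a * X ^ (e+1)).comp (X + 1) - C a * X ^ (e+1)).coeff k
      = a * ((e+1).choose k) - (if e+1 = k then a else 0) := by
  rw [Polynomial.coeff_sub, mul_comp, C_comp, X_pow_comp,
    coeff_C_mul, coeff_C_mul, coeff_X_add_one_pow, coeff_X_pow]
  split
  · simp_all
  · rw [if_neg (by omega)]; simp

lemma exists_antideriv : ∀ d : ℕ, ∀ f : Polynomial ℚ, f.natDegree ≤ d →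
    ∃ F : Polynomial ℚ, F.comp (X + 1) - F = f ∧ F.natDegree ≤ d + 1 ∧
      F.coeff (d+1) = f.coeff d / (d+1) := by
  intro d
  induction d with
  | zero =>
    intro f hf
    refine ⟨C (f.coeff 0) * X, ?_, ?_, ?_⟩
    · rw [mul_comp, C_comp, X_comp]
      ring_nf
      exact (Polynomial.eq_C_of_natDegree_le_zero hf).symm
    · exact (Polynomial.natDegree_C_mul_le _ _).trans (by simp)
    · simp
  | succ d ih =>
    intro f hf
    set c : ℚ := f.coeff (d+1) with hc
    set G : Polynomial ℚ := C (c / (d+2)) * X ^ (d+2) with hG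
    set g : Polynomial ℚ := f - (G.comp (X+1) - G) with hg
    have hDGcoeff : ∀ k, (G.comp (X+1) - G).coeff k
        = (c / (d+2)) * ((d+2).choose k) - (if d+2 = k then c/(d+2) else 0) := by
      intro k; exact coeff_delta_pow _ (d+1) k
    have hgdeg : g.natDegree ≤ d := by
      rw [Polynomial.natDegree_le_iff_coeff_eq_zero]
      intro N hN
      rw [hg, Polynomial.coeff_sub, hDGcoeff]
      rcases eq_or_lt_of_le (Nat.succ_le_of_lt hN) with h1 | h1
      · -- N = d+1
        rw [← h1]
        have : ((d+2).choose (d+1) : ℚ) = d + 2 := by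
          rw [show d + 2 = (d+1) + 1 from rfl, Nat.choose_succ_self_right]
          push_cast; ring
        rw [this]
        have h2 : (d:ℚ) + 2 ≠ 0 := by positivity
        field_simp
        rw [if_neg (by omega)]; simp [hc]
      · rcases eq_or_lt_of_le (Nat.succ_le_of_lt h1) with h2 | h2
        · -- N = d+2
          rw [← h2]
          have hfc : f.coeff (d+2) = 0 :=
            Polynomial.coeff_eq_zero_of_natDegree_lt (by omega)
          rw [hfc, Nat.choose_self]
          simp
        · have hfc : f.coeff N = 0 :=
            Polynomial.coeff_eq_zero_of_natDegree_lt (by omega)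
          have hch : (d+2).choose N = 0 := Nat.choose_eq_zero_of_lt (by omega)
          rw [hfc, hch, if_neg (by omega)]
          simp
    obtain ⟨F', hF'1, hF'2, hF'3⟩ := ih g hgdeg
    refine ⟨G + F', ?_, ?_, ?_⟩
    · rw [add_comp, add_sub_add_comm, hF'1, hg]; ring
    · refine (Polynomial.natDegree_add_le _ _).trans (max_le ?_ (by omega))
      exact (Polynomial.natDegree_C_mul_le _ _).trans (by simp)
    · rw [Polynomial.coeff_add,
        Polynomial.coeff_eq_zero_of_natDegree_lt (lt_of_le_of_lt hF'2 (by omega)),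
        add_zero, hG, Polynomial.coeff_C_mul, Polynomial.coeff_X_pow, if_pos rfl,
        mul_one, hc]
      push_cast; ring_nf



lemma stirling_eq_zero : ∀ n k, n < k → stirling n k = 0 := by
  intro n
  induction n with
  | zero => intro k hk; cases k with | zero => omega | succ j => rfl
  | succ n ih =>
    intro k hk
    cases k with
    | zero => omega
    | succ j => rw [stirling, ih (j+1) (by omega), ih j (by omega)]; ring

lemma stirling_self : ∀ n, stirling n n = 1
  | 0 => rfl
  | n + 1 => by
    rw [stirling, stirling_self n, stirling_eq_zero n (n+1) (by omega)]; ring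

lemma stirling_succ_self : ∀ n, 2 * stirling (n+1) n = n * (n+1)
  | 0 => by rfl
  | n + 1 => by
    rw [stirling, stirling_self, Nat.mul_add, Nat.mul_left_comm,
      stirling_succ_self n]
    ring

lemma higherBell_one : ∀ m, higherBell m 1 = 1
  | 0 => rfl
  | m + 1 => by
    rw [higherBell]
    simp [higherBell_one m, stirling, stirling_self]

lemma exists_poly : ∀ N : ℕ, ∀ n : ℕ, 1 ≤ n → n ≤ N → ∃ Q : Polynomial ℚ,
    (∀ m : ℕ, (higherBell m n : ℚ) = Q.eval (m : ℚ)) ∧ Q.natDegree = n - 1 ∧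
    Q.leadingCoeff = (n.factorial : ℚ) / 2 ^ (n - 1) := by
  intro N
  induction N with
  | zero => omega
  | succ N ih =>
    intro n h1 h2
    rcases Nat.lt_or_ge n (N+1) with hn | hn
    · exact ih n h1 (by omega)
    have hnN : n = N + 1 := by omega
    subst hnN
    clear h1 h2
    cases N with
    | zero =>
      refine ⟨1, ?_, by simp, by simp⟩
      intro m
      rw [higherBell_one]; simp
    | succ M =>
      set N := M + 1 with hN
      choose! Q hQeval hQdeg hQlc using ih
      set f : Polynomial ℚ :=
        ∑ k ∈ Finset.Icc 1 N, C ((stirling (N+1) k : ℚ)) * Q k with hf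
      have hfeval : ∀ m : ℕ,
          f.eval (m : ℚ) = ∑ k ∈ Finset.Icc 1 N,
            ((higherBell m k : ℚ) * (stirling (N+1) k : ℚ)) := by
        intro m
        rw [hf, eval_finset_sum]
        refine Finset.sum_congr rfl ?_
        intro k hk
        rw [Finset.mem_Icc] at hk
        rw [eval_mul, eval_C, ← hQeval k hk.1 hk.2]
        ring
      have hfdeg : f.natDegree ≤ N - 1 := by
        refine natDegree_sum_le_of_forall_le _ _ ?_
        intro k hk
        rw [Finset.mem_Icc] at hk
        refine (natDegree_C_mul_le _ _).trans ?_
        rw [hQdeg k hk.1 hk.2]; omega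
      have hstir : (2 : ℚ) * (stirling (N+1) N : ℚ) = N * (N + 1) := by
        have h := stirling_succ_self N
        have h2 : ((2 * stirling (N+1) N : ℕ) : ℚ) = ((N * (N+1) : ℕ) : ℚ) := by
          exact_mod_cast congrArg (Nat.cast : ℕ → ℚ) h
        have h3 : (N : ℚ) = (M : ℚ) + 1 := by rw [hN]; push_cast; ring
        push_cast at h2
        rw [h3]
        rw [h3] at h2; linarith
      have hcoeff : f.coeff (N - 1)
          = (stirling (N+1) N : ℚ) * ((N.factorial : ℚ) / 2 ^ (N - 1)) := by
        rw [hf, finset_sum_coeff]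
        rw [Finset.sum_eq_single N]
        · have hd := hQdeg N (by omega) le_rfl
          have hcc : (Q N).coeff (N-1) = (Q N).leadingCoeff := by
            rw [← hd, coeff_natDegree]
          rw [coeff_C_mul, hcc, hQlc N (by omega) le_rfl]
        · intro k hk hkN
          rw [Finset.mem_Icc] at hk
          have hz : (Q k).coeff (N - 1) = 0 :=
            coeff_eq_zero_of_natDegree_lt (by rw [hQdeg k hk.1 hk.2]; omega)
          rw [coeff_C_mul, hz, mul_zero]
        · intro h
          exact absurd (Finset.mem_Icc.mpr ⟨by omega, le_rfl⟩) h
      have hcne : f.coeff (N - 1) ≠ 0 := by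
        rw [hcoeff]
        have h1 : (stirling (N+1) N : ℚ) ≠ 0 := by
          have hs := stirling_succ_self N
          have hp : 0 < N * (N + 1) := Nat.mul_pos (by omega) (by omega)
          have : stirling (N+1) N ≠ 0 := by omega
          exact_mod_cast Nat.cast_ne_zero.mpr this
        have h2 : ((N.factorial : ℚ) / 2 ^ (N - 1)) ≠ 0 := by
          have := N.factorial_pos
          positivity
        exact mul_ne_zero h1 h2
      obtain ⟨F, hF1, hF2, hF3⟩ := exists_antideriv (N - 1) f hfdeg
      have hNN : N - 1 + 1 = N := by omega
      rw [hNN] at hF2 hF3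
      set F' : Polynomial ℚ := F + C (1 - F.eval 0) with hF'
      have hF'delta : F'.comp (X + 1) - F' = f := by
        rw [hF', add_comp, C_comp, add_sub_add_comm, sub_self, add_zero, hF1]
      have hF'step : ∀ m : ℕ, F'.eval ((m : ℚ) + 1) = F'.eval (m : ℚ) + f.eval (m : ℚ) := by
        intro m
        have h := congrArg (eval (m : ℚ)) hF'delta
        simp only [eval_sub, eval_comp, eval_add, eval_X, eval_one, eval_C,
          hF'] at h ⊢
        linarith
      have hF'eval : ∀ m : ℕ, (higherBell m (N+1) : ℚ) = F'.eval (m : ℚ) := by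
        intro m
        induction m with
        | zero =>
          show ((1 : ℕ) : ℚ) = _
          rw [Nat.cast_zero, hF', eval_add, eval_C]
          push_cast; ring
        | succ m ihm =>
          have hrec : (higherBell (m+1) (N+1) : ℚ)
              = ∑ k ∈ Finset.Icc 1 N,
                  ((higherBell m k : ℚ) * (stirling (N+1) k : ℚ))
                + (higherBell m (N+1) : ℚ) := by
            rw [show higherBell (m+1) (N+1)
                = ∑ k ∈ Finset.Icc 1 (N+1), higherBell m k * stirling (N+1) k
                from rfl,
              Finset.sum_Icc_succ_top (by omega : 1 ≤ N + 1), stirling_self]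
            push_cast
            ring
          rw [hrec, ihm, ← hfeval m, Nat.cast_succ, hF'step m]
          ring
      have hcast : ((N - 1 : ℕ) : ℚ) + 1 = (N : ℚ) := by
        have hM : N - 1 = M := by omega
        rw [hM, hN]; push_cast; ring
      have hF'coeff : F'.coeff N = f.coeff (N - 1) / N := by
        rw [hF', coeff_add, coeff_C, if_neg (by omega), add_zero, hF3, hcast]
      have hF'deg : F'.natDegree = N := by
        refine le_antisymm ?_ (le_natDegree_of_ne_zero ?_)
        · refine (natDegree_add_le _ _).trans (max_le hF2 ?_)
          simp
        · rw [hF'coeff]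
          exact div_ne_zero hcne (Nat.cast_ne_zero.mpr (by omega))
      refine ⟨F', hF'eval, by rw [hF'deg]; omega, ?_⟩
      rw [← coeff_natDegree, hF'deg, hF'coeff, hcoeff]
      rw [show N + 1 - 1 = N from rfl]
      have h2 : (2 : ℚ) ^ (N - 1) ≠ 0 := by positivity
      have hNne : (N : ℚ) ≠ 0 := Nat.cast_ne_zero.mpr (by omega)
      have hfact : ((N+1).factorial : ℚ) = (N + 1) * N.factorial := by
        push_cast [Nat.factorial_succ]; ring
      have hpow : (2 : ℚ) ^ N = 2 ^ (N - 1) * 2 := by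
        rw [← pow_succ, hNN]
      rw [hfact, hpow]
      field_simp
      linear_combination hstir

theorem stmt7 (n : ℕ) (hn : 1 ≤ n) (P : Polynomial ℚ)
    (hP : ∀ m : ℕ, (higherBell m n : ℚ) = P.eval (m : ℚ)) :
    P.natDegree = n - 1 ∧ P.leadingCoeff = (n.factorial : ℚ) / 2 ^ (n - 1) := by
  obtain ⟨Q, hQe, hQd, hQl⟩ := exists_poly n n hn le_rfl
  have hPQ : P = Q := by
    refine Polynomial.eq_of_infinite_eval_eq P Q ?_
    refine (Set.infinite_range_of_injective
      (Nat.cast_injective : Function.Injective (Nat.cast : ℕ → ℚ))).mono ?_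
    rintro x ⟨m, rfl⟩
    show Polynomial.eval (m : ℚ) P = Polynomial.eval (m : ℚ) Q
    rw [← hP m, ← hQe m]
  rw [hPQ]
  exact ⟨hQd, hQl⟩
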